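/- arXiv:1305.1722 — 6 statements merged into one kernel-verified Lean document; each statement's English description precedes it below -/
import Mathlib

section
/- For every r > 1 and every (α, β) ∈ ℂ² with |α|² + |β|² = 1, one has c_0 + c_1 = 1, where c_0 = Σ_{j=0}^{∞} ((r²−1)/((r−1+j)(r+1+j)))·(2r²/((1+r)²(2r−1)²))·|α√(1−1/r) + β√(1+1/r)|² and c_1 = (r/(r+1))·|−α/r + β√(1−1/r²)|² + ((r−1)/r)·|α√(1−1/r²) + β/r|² + Σ_{j=2}^{∞} (1/(r(r+1)(r−1)²))·|α(r²+r−1)/(r−1) − β√(r²−1)|²·((r−1)/r)^{2j}. (The total mass of the origin localization and the bottom localization equals one.) -/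
/-!
The weights of the origin series telescope, `(r²-1)/((r-1+j)(r+1+j)) = g j - g (j+1)` with
`g j = (r²-1)/2 · (1/(r-1+j) + 1/(r+j))`, so they sum to `(r+1)(2r-1)/(2r)`; the bottom tail is
geometric with ratio `((r-1)/r)²`. Expanding `‖α x + β y‖² = x²‖α‖² + y²‖β‖² + 2xy Re(ᾱβ)` for
real `x, y`, the four masses become linear in `‖α‖²`, `‖β‖²` and `√(r²-1) Re(ᾱβ)`: the
interference terms cancel and the coefficients of `‖α‖²` and `‖β‖²` both add up to `1`.
-/

open Filter Topology ComplexConjugate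

lemma hasSum_sub_succ_of_antitone {f : ℕ → ℝ} {l : ℝ} (hf : Antitone f)
    (hl : Tendsto f atTop (𝓝 l)) : HasSum (fun n ↦ f n - f (n + 1)) (f 0 - l) := by
  rw [hasSum_iff_tendsto_nat_of_nonneg fun n ↦ sub_nonneg.2 (hf n.le_succ)]
  simp_rw [Finset.sum_range_sub']
  exact tendsto_const_nhds.sub hl

lemma antitone_one_div_add_natCast {a : ℝ} (ha : 0 < a) : Antitone fun n : ℕ ↦ 1 / (a + n) :=
  fun _ _ h ↦ one_div_le_one_div_of_le (by positivity) (by gcongr)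

lemma tendsto_one_div_add_natCast (a : ℝ) : Tendsto (fun n : ℕ ↦ 1 / (a + n)) atTop (𝓝 0) := by
  simp_rw [one_div]
  exact (tendsto_atTop_add_const_left atTop a tendsto_natCast_atTop_atTop).inv_tendsto_atTop

lemma hasSum_two_div_mul_add_two {a : ℝ} (ha : 0 < a) :
    HasSum (fun n : ℕ ↦ 2 / ((a + n) * (a + n + 2))) (1 / a + 1 / (a + 1)) := by
  have hanti : Antitone fun n : ℕ ↦ 1 / (a + n) + 1 / (a + 1 + n) :=
    (antitone_one_div_add_natCast ha).add (antitone_one_div_add_natCast (by linarith))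
  have hlim := (tendsto_one_div_add_natCast a).add (tendsto_one_div_add_natCast (a + 1))
  rw [add_zero] at hlim
  convert hasSum_sub_succ_of_antitone hanti hlim using 1
  · ext n
    have : 0 < a + n := by positivity
    field_simp
    push_cast
    ring
  · simp

lemma hasSum_sq_sub_one_div_mul {r : ℝ} (hr : 1 < r) :
    HasSum (fun j : ℕ ↦ (r ^ 2 - 1) / ((r - 1 + j) * (r + 1 + j)))
      ((r + 1) * (2 * r - 1) / (2 * r)) := by
  have hsum := (hasSum_two_div_mul_add_two (sub_pos.2 hr)).mul_left ((r ^ 2 - 1) / 2)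
  have hr1 : r - 1 ≠ 0 := by linarith
  have hr0 : r ≠ 0 := by linarith
  rw [sub_add_cancel, show (r ^ 2 - 1) / 2 * (1 / (r - 1) + 1 / r) =
    (r + 1) * (2 * r - 1) / (2 * r) by field_simp; ring] at hsum
  have hterm (j : ℕ) : (r ^ 2 - 1) / ((r - 1 + j) * (r + 1 + j)) =
      (r ^ 2 - 1) / 2 * (2 / ((r - 1 + j) * (r - 1 + j + 2))) := by
    rw [show r - 1 + j + 2 = r + 1 + j by ring, mul_div_assoc', div_mul_cancel₀ _ two_ne_zero]
  simp_rw [hterm]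
  exact hsum

lemma tsum_pow_two_mul_add_two {q : ℝ} (hq : |q| < 1) :
    ∑' j : ℕ, q ^ (2 * (j + 2)) = q ^ 4 / (1 - q ^ 2) := by
  have hq2 : |q ^ 2| < 1 := by rw [abs_pow]; exact pow_lt_one₀ (abs_nonneg q) hq two_ne_zero
  simp_rw [pow_mul, pow_add, tsum_mul_right, tsum_geometric_of_abs_lt_one hq2]
  ring

lemma Complex.sq_norm_mul_ofReal_add_mul_ofReal (α β : ℂ) (x y : ℝ) :
    ‖α * x + β * y‖ ^ 2 = x ^ 2 * ‖α‖ ^ 2 + y ^ 2 * ‖β‖ ^ 2 + 2 * x * y * (conj α * β).re := by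
  simp only [Complex.sq_norm, Complex.normSq_apply, Complex.add_re, Complex.add_im,
    Complex.mul_re, Complex.mul_im, Complex.ofReal_re, Complex.ofReal_im, Complex.conj_re,
    Complex.conj_im]
  ring

lemma Real.sqrt_one_sub_one_div_sq {r : ℝ} (hr : 0 < r) :
    √(1 - 1 / r ^ 2) = √(r ^ 2 - 1) / r := by
  rw [show 1 - 1 / r ^ 2 = (r ^ 2 - 1) / r ^ 2 by field_simp, Real.sqrt_div' _ (by positivity),
    Real.sqrt_sq hr.le]

lemma Real.sqrt_one_sub_one_div_mul_sqrt_one_add_one_div {r : ℝ} (hr : 0 < r) :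
    √(1 - 1 / r) * √(1 + 1 / r) = √(r ^ 2 - 1) / r := by
  rw [← Real.sqrt_mul' _ (by positivity), ← Real.sqrt_one_sub_one_div_sq hr]
  congr 1; ring

section Amplitudes

variable {r : ℝ} (α β : ℂ)

lemma sq_norm_origin_amplitude (hr : 1 ≤ r) :
    ‖α * (√(1 - 1 / r) : ℂ) + β * (√(1 + 1 / r) : ℂ)‖ ^ 2 =
      ((r - 1) * ‖α‖ ^ 2 + (r + 1) * ‖β‖ ^ 2 + 2 * √(r ^ 2 - 1) * (conj α * β).re) / r := by
  have hr0 : 0 < r := by linarith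
  have h1r : 1 / r ≤ 1 := (div_le_one hr0).2 hr
  rw [Complex.sq_norm_mul_ofReal_add_mul_ofReal, Real.sq_sqrt (by linarith),
    Real.sq_sqrt (by positivity), mul_assoc 2,
    Real.sqrt_one_sub_one_div_mul_sqrt_one_add_one_div hr0]
  field_simp

lemma sq_norm_bottom_amplitude_left (hr : 1 ≤ r) :
    ‖-α / r + β * (√(1 - 1 / r ^ 2) : ℂ)‖ ^ 2 =
      (‖α‖ ^ 2 + (r ^ 2 - 1) * ‖β‖ ^ 2 - 2 * √(r ^ 2 - 1) * (conj α * β).re) / r ^ 2 := by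
  have hr0 : 0 < r := by linarith
  rw [Real.sqrt_one_sub_one_div_sq hr0, show -α / r + β * ((√(r ^ 2 - 1) / r : ℝ) : ℂ) =
      α * ((-(1 / r) : ℝ) : ℂ) + β * ((√(r ^ 2 - 1) / r : ℝ) : ℂ) by push_cast; ring,
    Complex.sq_norm_mul_ofReal_add_mul_ofReal, div_pow, Real.sq_sqrt (by nlinarith)]
  field_simp
  ring

lemma sq_norm_bottom_amplitude_right (hr : 1 ≤ r) :
    ‖α * (√(1 - 1 / r ^ 2) : ℂ) + β / r‖ ^ 2 =
      ((r ^ 2 - 1) * ‖α‖ ^ 2 + ‖β‖ ^ 2 + 2 * √(r ^ 2 - 1) * (conj α * β).re) / r ^ 2 := by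
  have hr0 : 0 < r := by linarith
  rw [Real.sqrt_one_sub_one_div_sq hr0, show α * ((√(r ^ 2 - 1) / r : ℝ) : ℂ) + β / r =
      α * ((√(r ^ 2 - 1) / r : ℝ) : ℂ) + β * ((1 / r : ℝ) : ℂ) by push_cast; ring,
    Complex.sq_norm_mul_ofReal_add_mul_ofReal, div_pow, Real.sq_sqrt (by nlinarith)]
  field_simp

lemma sq_norm_bottom_amplitude_tail (hr : 1 ≤ r) (x : ℝ) :
    ‖α * (x : ℂ) - β * (√(r ^ 2 - 1) : ℂ)‖ ^ 2 =
      x ^ 2 * ‖α‖ ^ 2 + (r ^ 2 - 1) * ‖β‖ ^ 2 - 2 * x * √(r ^ 2 - 1) * (conj α * β).re := by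
  rw [sub_eq_add_neg, ← mul_neg, ← Complex.ofReal_neg, Complex.sq_norm_mul_ofReal_add_mul_ofReal,
    neg_sq, Real.sq_sqrt (by nlinarith)]
  ring

end Amplitudes

/-- The total mass of the origin localization and the bottom localization equals one:
`c_0 + c_1 = 1`. -/
theorem mass_sums_to_one (r : ℝ) (hr : 1 < r) (α β : ℂ)
    (hnorm : norm α ^ 2 + norm β ^ 2 = 1) :
    (∑' j : ℕ, (r ^ 2 - 1) / ((r - 1 + j) * (r + 1 + j)) *
        (2 * r ^ 2 / ((1 + r) ^ 2 * (2 * r - 1) ^ 2) *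
          norm (α * (Real.sqrt (1 - 1 / r) : ℂ)
            + β * (Real.sqrt (1 + 1 / r) : ℂ)) ^ 2)) +
      (r / (r + 1) * norm (-α / r + β * (Real.sqrt (1 - 1 / r ^ 2) : ℂ)) ^ 2 +
        (r - 1) / r * norm (α * (Real.sqrt (1 - 1 / r ^ 2) : ℂ) + β / r) ^ 2 +
        ∑' j : ℕ, 1 / (r * (r + 1) * (r - 1) ^ 2) *
          norm (α * (((r ^ 2 + r - 1) / (r - 1) : ℝ) : ℂ)
            - β * (Real.sqrt (r ^ 2 - 1) : ℂ)) ^ 2 *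
          ((r - 1) / r) ^ (2 * (j + 2))) = 1 := by
  have hq : |(r - 1) / r| < 1 := by
    rw [abs_lt, lt_div_iff₀ (by linarith), div_lt_one (by linarith)]
    constructor <;> linarith
  rw [tsum_mul_right, (hasSum_sq_sub_one_div_mul hr).tsum_eq, tsum_mul_left,
    tsum_pow_two_mul_add_two hq, sq_norm_origin_amplitude α β hr.le,
    sq_norm_bottom_amplitude_left α β hr.le, sq_norm_bottom_amplitude_right α β hr.le,
    sq_norm_bottom_amplitude_tail α β hr.le, show ‖β‖ ^ 2 = 1 - ‖α‖ ^ 2 by linarith]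
  have : r ≠ 0 := by linarith
  have : r - 1 ≠ 0 := by linarith
  -- the form in which `field_simp` meets the factor `2 * r - 1`
  have : r * 2 - 1 ≠ 0 := by linarith
  rw [show 1 - ((r - 1) / r) ^ 2 = (2 * r - 1) / r ^ 2 by field_simp; ring]
  field_simp
  ring
end

section
/- Large-deviation type convergence: assume the initial coin state φ_0 = (α, β) satisfies √(r−1)·α + √(r+1)·β = 0 (i.e., φ_0 is orthogonal to l = (√(r−1), √(r+1))). Then for every ε ∈ (0,1), lim_{n→∞} (1/n)·log( Σ_{j ∈ ℕ, j < n(1−ε)} μ_n(j) ) = 2ε·log((r−1)/r); equivalently, (1/n)·log P(1 − X_n/n > ε) converges to ε·log(((1−r)/r)²). -/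
open Filter Topology Matrix

/-- Coin parameter `γ_j = 1/(r+j)`. -/
noncomputable def gam (r : ℝ) (j : ℕ) : ℝ := 1 / (r + j)

/-- `ρ_j = √(1 - γ_j²)`. -/
noncomputable def rho (r : ℝ) (j : ℕ) : ℝ := Real.sqrt (1 - gam r j ^ 2)

/-- `P_j = [[ρ_j, γ_j], [0, 0]]`. -/
noncomputable def Pmat (r : ℝ) (j : ℕ) : Matrix (Fin 2) (Fin 2) ℂ :=
  !![(rho r j : ℂ), (gam r j : ℂ); 0, 0]

/-- `Q_j = [[0, 0], [−γ_j, ρ_j]]`. -/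
noncomputable def Qmat (r : ℝ) (j : ℕ) : Matrix (Fin 2) (Fin 2) ℂ :=
  !![0, 0; (-(gam r j) : ℂ), (rho r j : ℂ)]

/-- `S_0 = [[0, 0], [ρ_0, γ_0]]`. -/
noncomputable def Smat (r : ℝ) : Matrix (Fin 2) (Fin 2) ℂ :=
  !![0, 0; (rho r 0 : ℂ), (gam r 0 : ℂ)]

/-- Weight matrices `Ξ_n(j)` of the first-kind half-line quantum walk with
coin parameters `γ_j = 1/(r+j)`. -/
noncomputable def Xi (r : ℝ) : ℕ → ℕ → Matrix (Fin 2) (Fin 2) ℂ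
  | 0, 0 => 1
  | 0, _ + 1 => 0
  | n + 1, 0 => Pmat r 1 * Xi r n 1 + Smat r * Xi r n 0
  | n + 1, j + 1 => Pmat r (j + 2) * Xi r n (j + 2) + Qmat r j * Xi r n j

/-- Position distribution `μ_n(j) = ‖Ξ_n(j) φ_0‖²` (squared Euclidean norm on `ℂ²`)
for the initial coin state `φ_0 = (α, β)`. -/
noncomputable def mu (r : ℝ) (α β : ℂ) (n j : ℕ) : ℝ :=
  ‖(Xi r n j).mulVec ![α, β] 0‖ ^ 2
    + ‖(Xi r n j).mulVec ![α, β] 1‖ ^ 2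

/-!
Write `q = (r - 1) / r` (`decay`) and `c_j = √((r + j) / (2 (r + j - 1)))` (`front`). Orthogonality
to `l` makes `φ_0` a unimodular multiple of the unit vector `v = (c_1, -q c_0)`, and `Ξ_n(j) v` has a
closed form (`amp₁`, `amp₂`): it vanishes for `j > n`, equals `(0, -c_n)` at `j = n` and
`(0, q c_{n-1})` at `j = n - 1`, and equals `(-q)^(n-j-2) (L_j, R_j)` (`tail₁`, `tail₂`) for
`j ≤ n - 2`, where `L_j² = 1 / (2 (r + j) (r + j + 1))` and `R_j` is bounded. Hence
`μ_n(j) = q^(2(n-j-2)) (L_j² + R_j²)` for `j ≤ n - 2`, and the mass on `j < n (1 - ε)` is within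
polynomial factors of its last term, of order `q^(2(n - ⌈n (1 - ε)⌉))`.
-/

open Finset Real

section Asymptotics

variable {ε : ℝ}

lemma eventually_one_le_ceil_and_ceil_add_one_le (hε0 : 0 < ε) (hε1 : ε < 1) :
    ∀ᶠ n : ℕ in atTop, 1 ≤ ⌈n * (1 - ε)⌉₊ ∧ ⌈n * (1 - ε)⌉₊ + 1 ≤ n := by
  have hlarge : ∀ᶠ n : ℕ in atTop, (2 : ℝ) ≤ n * ε :=
    (tendsto_natCast_atTop_atTop.atTop_mul_const hε0).eventually_ge_atTop 2
  filter_upwards [hlarge] with n hn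
  have hpos : 0 < (n : ℝ) * (1 - ε) := by nlinarith
  have hlt : (⌈n * (1 - ε)⌉₊ : ℝ) < n * (1 - ε) + 1 := Nat.ceil_lt_add_one hpos.le
  refine ⟨Nat.one_le_iff_ne_zero.2 (Nat.ceil_pos.2 hpos).ne', ?_⟩
  exact_mod_cast (show (⌈n * (1 - ε)⌉₊ : ℝ) + 1 ≤ n by linarith)

lemma tendsto_sub_one_sub_ceil_div (hε0 : 0 < ε) (hε1 : ε < 1) :
    Tendsto (fun n : ℕ => ((n - 1 - ⌈n * (1 - ε)⌉₊ : ℕ) : ℝ) / n) atTop (𝓝 ε) := by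
  have hceil : Tendsto (fun n : ℕ => (⌈n * (1 - ε)⌉₊ : ℝ) / n) atTop (𝓝 (1 - ε)) := by
    simpa only [mul_comm _ (1 - ε), Function.comp_def] using
      (tendsto_nat_ceil_mul_div_atTop (sub_nonneg.2 hε1.le)).comp tendsto_natCast_atTop_atTop
  have hlim :=
    ((tendsto_const_nhds (x := (1 : ℝ))).sub tendsto_one_div_atTop_nhds_zero_nat).sub hceil
  rw [sub_zero, sub_sub_cancel] at hlim
  refine hlim.congr' ?_
  filter_upwards [eventually_one_le_ceil_and_ceil_add_one_le hε0 hε1] with n ⟨_, hn⟩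
  have hn0 : (n : ℝ) ≠ 0 := by norm_cast; omega
  rw [Nat.cast_sub (by omega), Nat.cast_sub (by omega), Nat.cast_one]
  field_simp

lemma filter_range_natCast_lt {n : ℕ} {t : ℝ} (h : ⌈t⌉₊ ≤ n) :
    (range n).filter (fun j : ℕ => (j : ℝ) < t) = range ⌈t⌉₊ := by
  ext j
  simp only [mem_filter, mem_range, ← Nat.lt_ceil]
  omega

lemma tendsto_log_add_div_natCast (a : ℝ) :
    Tendsto (fun n : ℕ => log (n + a) / n) atTop (𝓝 0) := by
  have h := (tendsto_pow_log_div_mul_add_atTop 1 (-a) 1 one_ne_zero).comp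
    (tendsto_atTop_add_const_right _ a tendsto_natCast_atTop_atTop)
  refine h.congr fun n => ?_
  simp

lemma tendsto_log_div_natCast_of_bounds {T : ℕ → ℝ} {c a C : ℝ} {k : ℕ} (hc : 0 < c)
    (hT : ∀ᶠ n : ℕ in atTop, c / (n + a) ^ k ≤ T n ∧ T n ≤ C) :
    Tendsto (fun n : ℕ => log (T n) / n) atTop (𝓝 0) := by
  have hpos : ∀ᶠ n : ℕ in atTop, 0 < (n : ℝ) + a :=
    (tendsto_atTop_add_const_right _ a tendsto_natCast_atTop_atTop).eventually_gt_atTop 0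
  have hlower : Tendsto (fun n : ℕ => log (c / (n + a) ^ k) / n) atTop (𝓝 0) := by
    have h := (tendsto_one_div_atTop_nhds_zero_nat.const_mul (log c)).sub
      ((tendsto_log_add_div_natCast a).const_mul (k : ℝ))
    rw [mul_zero, mul_zero, sub_zero] at h
    refine h.congr' ?_
    filter_upwards [hpos] with n hna
    rw [log_div hc.ne' (by positivity), log_pow]
    ring
  have hupper : Tendsto (fun n : ℕ => log C / n) atTop (𝓝 0) := by
    simpa only [mul_zero, mul_one_div] using tendsto_one_div_atTop_nhds_zero_nat.const_mul (log C)
  refine tendsto_of_tendsto_of_tendsto_of_le_of_le' hlower hupper ?_ ?_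
  all_goals
    filter_upwards [hT, hpos] with n ⟨hlo, hhi⟩ hna
    have hL : 0 < c / (n + a) ^ k := by positivity
    gcongr
  exact hL.trans_le hlo

lemma sum_range_pow_sub_mul_le {x C : ℝ} {m : ℕ → ℝ} (hx0 : 0 ≤ x) (hx1 : x < 1) (hC : 0 ≤ C)
    (hm : ∀ j, m j ≤ C) (K : ℕ) :
    ∑ j ∈ range K, x ^ (K - 1 - j) * m j ≤ C / (1 - x) :=
  calc ∑ j ∈ range K, x ^ (K - 1 - j) * m j ≤ ∑ j ∈ range K, x ^ (K - 1 - j) * C := by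
        gcongr with j; exact hm j
    _ = C * ∑ i ∈ range K, x ^ i := by
        rw [← sum_mul, sum_range_reflect (fun i => x ^ i) K, mul_comm]
    _ ≤ C / (1 - x) := by
        have h := geom_sum_Ico_le_of_lt_one hx0 hx1 (m := 0) (n := K)
        rw [pow_zero, ← range_eq_Ico] at h
        rw [← mul_one_div]
        exact mul_le_mul_of_nonneg_left h hC

theorem tendsto_log_sum_range_pow_mul {x ε c a C : ℝ} {k : ℕ} {m : ℕ → ℝ} {K : ℕ → ℕ}
    (hx0 : 0 < x) (hx1 : x < 1) (hc : 0 < c) (ha : 0 < a)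
    (hm : ∀ j : ℕ, c / (j + a) ^ k ≤ m j) (hmC : ∀ j, m j ≤ C)
    (hK : ∀ᶠ n in atTop, 1 ≤ K n ∧ K n + 1 ≤ n)
    (hKε : Tendsto (fun n : ℕ => ((n - 1 - K n : ℕ) : ℝ) / n) atTop (𝓝 ε)) :
    Tendsto (fun n : ℕ => 1 / n * log (∑ j ∈ range (K n), x ^ (n - j - 2) * m j))
      atTop (𝓝 (ε * log x)) := by
  set T : ℕ → ℝ := fun n => ∑ j ∈ range (K n), x ^ (K n - 1 - j) * m j
  have hm0 (j : ℕ) : 0 ≤ m j := (by positivity : 0 ≤ c / (j + a) ^ k).trans (hm j)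
  have hsplit : ∀ᶠ n : ℕ in atTop,
      ∑ j ∈ range (K n), x ^ (n - j - 2) * m j = x ^ (n - 1 - K n) * T n := by
    filter_upwards [hK] with n ⟨_, hn⟩
    rw [mul_sum]
    refine sum_congr rfl fun j hj => ?_
    rw [← mul_assoc, ← pow_add]
    congr 2
    have := mem_range.1 hj
    omega
  -- `T n` lies between its last term `m (K n - 1)` and a geometric series.
  have hT : ∀ᶠ n : ℕ in atTop, c / (n + a) ^ k ≤ T n ∧ T n ≤ C / (1 - x) := by
    filter_upwards [hK] with n ⟨hK1, hn⟩
    refine ⟨?_, sum_range_pow_sub_mul_le hx0.le hx1 ((hm0 0).trans (hmC 0)) hmC _⟩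
    have hlast : m (K n - 1) ≤ T n := by
      simpa using single_le_sum (f := fun j => x ^ (K n - 1 - j) * m j)
        (fun j _ => mul_nonneg (pow_nonneg hx0.le _) (hm0 j))
        (mem_range.2 (Nat.sub_one_lt_of_lt hK1))
    refine le_trans ?_ ((hm _).trans hlast)
    gcongr
    exact_mod_cast (Nat.sub_le _ _).trans (by omega : K n ≤ n)
  have hlim := (hKε.mul_const (log x)).add (tendsto_log_div_natCast_of_bounds hc hT)
  rw [add_zero] at hlim
  refine hlim.congr' ?_
  filter_upwards [hsplit, hT] with n hs ⟨hlo, _⟩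
  have hT0 : 0 < T n := (by positivity : 0 < c / (n + a) ^ k).trans_le hlo
  rw [hs, log_mul (pow_pos hx0 _).ne' hT0.ne', log_pow]
  ring

end Asymptotics

namespace QuantumWalk

noncomputable section

variable {r : ℝ}

def decay (r : ℝ) : ℝ := (r - 1) / r

def front (r : ℝ) (j : ℕ) : ℝ := √((r + j) / (2 * (r + j - 1)))

def tail₁ (r : ℝ) (j : ℕ) : ℝ := -(gam r (j + 1) * front r (j + 1))

def tail₂ (r : ℝ) (j : ℕ) : ℝ := ((2 * r - 1) / r ^ 2 - 1 / (r + j)) * front r j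

lemma add_nat_sub_one_pos (hr : 1 < r) (j : ℕ) : 0 < r + j - 1 := by
  have := j.cast_nonneg (α := ℝ); linarith

lemma add_nat_pos (hr : 1 < r) (j : ℕ) : 0 < r + j := by
  have := add_nat_sub_one_pos hr j; linarith

lemma rho_sq (hr : 1 < r) (j : ℕ) : rho r j ^ 2 = 1 - gam r j ^ 2 := by
  have hj := add_nat_sub_one_pos hr j
  refine Real.sq_sqrt (sub_nonneg.2 ?_)
  rw [gam, div_pow, one_pow, div_le_one (by positivity)]
  nlinarith

lemma rho_mul_front (hr : 1 < r) (j : ℕ) : rho r j * front r j = front r (j + 1) := by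
  have hj := add_nat_sub_one_pos hr j
  have hρ : 0 ≤ 1 - gam r j ^ 2 := by rw [← rho_sq hr j]; positivity
  rw [rho, front, front, ← Real.sqrt_mul hρ, gam]
  congr 1
  push_cast
  rw [show r + (j + 1 : ℝ) - 1 = r + j by ring]
  field_simp
  ring

lemma front_sq (hr : 1 < r) (j : ℕ) : front r j ^ 2 = (r + j) / (2 * (r + j - 1)) := by
  have hj := add_nat_sub_one_pos hr j
  exact Real.sq_sqrt (by positivity)

lemma tail₁_sq (hr : 1 < r) (j : ℕ) : tail₁ r j ^ 2 = 1 / (2 * (r + j) * (r + j + 1)) := by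
  rw [tail₁, neg_sq, mul_pow, front_sq hr, gam]
  push_cast
  rw [show r + (j + 1 : ℝ) - 1 = r + j by ring]
  field_simp
  ring

lemma tail₂_succ (hr : 1 < r) (j : ℕ) :
    tail₂ r (j + 1) = -(gam r j * tail₁ r j) + rho r j * tail₂ r j := by
  rw [tail₁, tail₂, tail₂, ← rho_mul_front hr, gam, gam]
  push_cast
  field_simp
  ring

lemma decay_sq_mul_tail₁ (hr : 1 < r) (j : ℕ) :
    decay r ^ 2 * tail₁ r j
      = rho r (j + 1) * tail₁ r (j + 1) + gam r (j + 1) * tail₂ r (j + 1) := by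
  have hρ := rho_sq hr (j + 1)
  rw [tail₁, tail₁, tail₂, ← rho_mul_front hr (j + 1)]
  simp only [gam, decay] at hρ ⊢
  push_cast at hρ ⊢
  linear_combination (norm := (field_simp; ring)) (front r (j + 1) / (r + j + 2)) * hρ

lemma neg_decay_mul_tail₂_zero (hr : 1 < r) :
    -decay r * tail₂ r 0 = rho r 0 * tail₁ r 0 + gam r 0 * tail₂ r 0 := by
  have hρ := rho_sq hr 0
  rw [tail₁, tail₂, ← rho_mul_front hr 0]
  simp only [gam, decay] at hρ ⊢
  push_cast at hρ ⊢
  linear_combination (norm := (field_simp; ring)) (front r 0 / (r + 1)) * hρ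

lemma tail₂_zero (hr : 1 < r) : tail₂ r 0 = gam r 0 * (decay r * front r 0) := by
  rw [tail₂, gam, decay]
  push_cast
  field_simp
  ring

lemma front_one_eq_gam_mul_add (hr : 1 < r) :
    front r 1 = gam r 0 * front r 1 + rho r 0 * (decay r * front r 0) := by
  rw [← rho_mul_front hr 0, gam, decay]
  push_cast
  field_simp
  ring

lemma decay_mul_front_zero_eq_rho_mul_sub (hr : 1 < r) :
    decay r * front r 0 = rho r 0 * front r 1 - gam r 0 * (decay r * front r 0) := by
  have hρ := rho_sq hr 0
  rw [← rho_mul_front hr 0]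
  simp only [gam, decay] at hρ ⊢
  push_cast at hρ ⊢
  linear_combination (norm := (field_simp; ring)) (-front r 0) * hρ

def amp₁ (r : ℝ) (n j : ℕ) : ℝ :=
  if n = 0 ∧ j = 0 then front r 1
  else if j + 2 ≤ n then (-decay r) ^ (n - j - 2) * tail₁ r j
  else 0

def amp₂ (r : ℝ) (n j : ℕ) : ℝ :=
  if n = 0 ∧ j = 0 then -(decay r * front r 0)
  else if n < j then 0
  else if n = j then -front r n
  else if n = j + 1 then decay r * front r j
  else (-decay r) ^ (n - j - 2) * tail₂ r j

section amplitudes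

variable (r) {n j : ℕ}

lemma amp₁_zero_zero : amp₁ r 0 0 = front r 1 := if_pos ⟨rfl, rfl⟩

lemma amp₂_zero_zero : amp₂ r 0 0 = -(decay r * front r 0) := if_pos ⟨rfl, rfl⟩

lemma amp₁_of_lt (h : n < j + 2) (h0 : n ≠ 0 ∨ j ≠ 0) : amp₁ r n j = 0 := by
  rw [amp₁, if_neg (by tauto), if_neg (by omega)]

lemma amp₁_of_add_two_le (h : j + 2 ≤ n) : amp₁ r n j = (-decay r) ^ (n - j - 2) * tail₁ r j := by
  rw [amp₁, if_neg (by omega), if_pos h]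

lemma amp₂_of_lt (h : n < j) : amp₂ r n j = 0 := by
  rw [amp₂, if_neg (by omega), if_pos h]

lemma amp₂_self (h : n ≠ 0) : amp₂ r n n = -front r n := by
  rw [amp₂, if_neg (by omega), if_neg (by omega), if_pos rfl]

lemma amp₂_succ_self : amp₂ r (j + 1) j = decay r * front r j := by
  rw [amp₂, if_neg (by omega), if_neg (by omega), if_neg (by omega), if_pos rfl]

lemma amp₂_of_add_two_le (h : j + 2 ≤ n) : amp₂ r n j = (-decay r) ^ (n - j - 2) * tail₂ r j := by
  rw [amp₂, if_neg (by omega), if_neg (by omega), if_neg (by omega), if_neg (by omega)]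

end amplitudes

lemma amp₁_succ (hr : 1 < r) (n j : ℕ) :
    amp₁ r (n + 1) j = rho r (j + 1) * amp₁ r n (j + 1) + gam r (j + 1) * amp₂ r n (j + 1) := by
  obtain h | rfl | rfl | ⟨d, rfl⟩ : n < j + 1 ∨ n = j + 1 ∨ n = j + 2 ∨ ∃ d, n = j + 3 + d := by
    rcases Nat.lt_or_ge n (j + 3) with h | h
    · omega
    · exact Or.inr (Or.inr (Or.inr ⟨n - (j + 3), by omega⟩))
  · rw [amp₁_of_lt r (by omega) (by omega), amp₁_of_lt r (by omega) (by omega), amp₂_of_lt r h]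
    ring
  · rw [amp₁_of_add_two_le r le_rfl, amp₁_of_lt r (by omega) (by omega), amp₂_self r (by omega),
      tail₁, show j + 2 - j - 2 = 0 by omega, pow_zero]
    ring
  · rw [amp₁_of_add_two_le r (by omega), amp₁_of_lt r (by omega) (by omega), amp₂_succ_self,
      tail₁, show j + 2 + 1 - j - 2 = 1 by omega]
    ring
  · rw [amp₁_of_add_two_le r (by omega), amp₁_of_add_two_le r (by omega),
      amp₂_of_add_two_le r (by omega), show j + 3 + d + 1 - j - 2 = d + 2 by omega,
      show j + 3 + d - (j + 1) - 2 = d by omega]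
    linear_combination (-decay r) ^ d * decay_sq_mul_tail₁ hr j

lemma amp₂_succ_zero (hr : 1 < r) (n : ℕ) :
    amp₂ r (n + 1) 0 = rho r 0 * amp₁ r n 0 + gam r 0 * amp₂ r n 0 := by
  rcases n with _ | _ | d
  · rw [amp₂_succ_self, amp₁_zero_zero, amp₂_zero_zero]
    linear_combination decay_mul_front_zero_eq_rho_mul_sub hr
  · rw [amp₂_of_add_two_le r le_rfl, amp₂_succ_self, amp₁_of_lt r (by omega) (by omega)]
    simp only [Nat.sub_self, pow_zero]
    linear_combination tail₂_zero hr
  · rw [amp₂_of_add_two_le r (by omega), amp₂_of_add_two_le r (by omega),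
      amp₁_of_add_two_le r (by omega), show d + 1 + 1 + 1 - 0 - 2 = d + 1 by omega,
      show d + 1 + 1 - 0 - 2 = d by omega]
    linear_combination (-decay r) ^ d * neg_decay_mul_tail₂_zero hr

lemma amp₂_succ_succ (hr : 1 < r) (n j : ℕ) :
    amp₂ r (n + 1) (j + 1) = -(gam r j * amp₁ r n j) + rho r j * amp₂ r n j := by
  obtain h | ⟨rfl, rfl⟩ | ⟨rfl, h⟩ | rfl | ⟨d, rfl⟩ :
      n < j ∨ (n = 0 ∧ j = 0) ∨ (n = j ∧ n ≠ 0) ∨ n = j + 1 ∨ ∃ d, n = j + 2 + d := by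
    rcases Nat.lt_or_ge n (j + 2) with h | h
    · omega
    · exact Or.inr (Or.inr (Or.inr (Or.inr ⟨n - (j + 2), by omega⟩)))
  · rw [amp₂_of_lt r (by omega), amp₂_of_lt r h, amp₁_of_lt r (by omega) (by omega)]
    ring
  · rw [zero_add, amp₂_self r one_ne_zero, amp₁_zero_zero, amp₂_zero_zero]
    linear_combination -front_one_eq_gam_mul_add hr
  · rw [amp₂_self r (by omega), amp₂_self r h, amp₁_of_lt r (by omega) (by omega)]
    linear_combination rho_mul_front hr n
  · rw [amp₂_succ_self, amp₂_succ_self, amp₁_of_lt r (by omega) (by omega)]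
    linear_combination -decay r * rho_mul_front hr j
  · rw [amp₂_of_add_two_le r (by omega), amp₂_of_add_two_le r (by omega),
      amp₁_of_add_two_le r (by omega), show j + 2 + d + 1 - (j + 1) - 2 = d by omega,
      show j + 2 + d - j - 2 = d by omega]
    linear_combination (-decay r) ^ d * tail₂_succ hr j

lemma Pmat_mulVec (k : ℕ) (x y : ℝ) :
    Pmat r k *ᵥ ![(x : ℂ), (y : ℂ)] = ![((rho r k * x + gam r k * y : ℝ) : ℂ), 0] := by
  ext i; fin_cases i <;> simp [Pmat, mulVec, dotProduct]

lemma Qmat_mulVec (k : ℕ) (x y : ℝ) :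
    Qmat r k *ᵥ ![(x : ℂ), (y : ℂ)] = ![0, ((-(gam r k * x) + rho r k * y : ℝ) : ℂ)] := by
  ext i; fin_cases i <;> simp [Qmat, mulVec, dotProduct]

lemma Smat_mulVec (x y : ℝ) :
    Smat r *ᵥ ![(x : ℂ), (y : ℂ)] = ![0, ((rho r 0 * x + gam r 0 * y : ℝ) : ℂ)] := by
  ext i; fin_cases i <;> simp [Smat, mulVec, dotProduct]

theorem Xi_mulVec (hr : 1 < r) (n j : ℕ) :
    Xi r n j *ᵥ ![(front r 1 : ℂ), ((-(decay r * front r 0) : ℝ) : ℂ)]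
      = ![(amp₁ r n j : ℂ), (amp₂ r n j : ℂ)] := by
  induction n generalizing j with
  | zero =>
    cases j with
    | zero => simp [Xi, amp₁_zero_zero, amp₂_zero_zero]
    | succ j =>
      simp only [Xi, zero_mulVec, amp₁_of_lt r (by omega : 0 < j + 1 + 2) (by omega),
        amp₂_of_lt r (Nat.succ_pos j), Complex.ofReal_zero]
      ext i; fin_cases i <;> rfl
  | succ n ih =>
    cases j with
    | zero =>
      rw [Xi, add_mulVec, ← mulVec_mulVec, ← mulVec_mulVec, ih, ih, Pmat_mulVec, Smat_mulVec,
        amp₁_succ hr, amp₂_succ_zero hr]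
      simp
    | succ j =>
      rw [Xi, add_mulVec, ← mulVec_mulVec, ← mulVec_mulVec, ih, ih, Pmat_mulVec, Qmat_mulVec,
        amp₁_succ hr, amp₂_succ_succ hr]
      simp

lemma mu_mul_ofReal (ω : ℂ) (x y : ℝ) (n j : ℕ) :
    mu r (ω * x) (ω * y) n j
      = ‖ω‖ ^ 2 * (‖(Xi r n j *ᵥ ![(x : ℂ), (y : ℂ)]) 0‖ ^ 2
          + ‖(Xi r n j *ᵥ ![(x : ℂ), (y : ℂ)]) 1‖ ^ 2) := by
  have h : ![ω * x, ω * y] = ω • ![(x : ℂ), (y : ℂ)] := by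
    ext i; fin_cases i <;> simp
  rw [mu, h, mulVec_smul]
  simp only [Pi.smul_apply, smul_eq_mul, norm_mul, mul_pow]
  ring

lemma sqrt_two_mul_front_one (hr : 1 < r) : √(2 * r) * front r 1 = √(r + 1) := by
  rw [front, ← Real.sqrt_mul (by positivity)]
  congr 1
  rw [Nat.cast_one, add_sub_cancel_right]
  field_simp

lemma sqrt_two_mul_decay_mul_front_zero (hr : 1 < r) :
    √(2 * r) * (decay r * front r 0) = √(r - 1) := by
  have hq : decay r = √(decay r ^ 2) := (Real.sqrt_sq (by rw [decay]; positivity)).symm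
  rw [front, hq, ← Real.sqrt_mul (by positivity), ← Real.sqrt_mul (by positivity), decay,
    Nat.cast_zero, add_zero]
  congr 1
  field_simp

lemma exists_eq_mul_of_orthogonal {a b : ℝ} (hab : a ^ 2 + b ^ 2 = 1) {α β : ℂ}
    (h : b * α + a * β = 0) : ∃ ω : ℂ, α = ω * a ∧ β = ω * ((-b : ℝ) : ℂ) := by
  have hab' : (a : ℂ) ^ 2 + (b : ℂ) ^ 2 = 1 := by exact_mod_cast hab
  refine ⟨a * α - b * β, ?_, ?_⟩
  · linear_combination (b : ℂ) * h - α * hab'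
  · push_cast
    linear_combination (a : ℂ) * h - β * hab'

lemma mu_eq_of_orthogonal {a b : ℝ} (hab : a ^ 2 + b ^ 2 = 1) {α β : ℂ}
    (hnorm : ‖α‖ ^ 2 + ‖β‖ ^ 2 = 1) (horth : b * α + a * β = 0) (n j : ℕ) :
    mu r α β n j = ‖(Xi r n j *ᵥ ![(a : ℂ), ((-b : ℝ) : ℂ)]) 0‖ ^ 2
      + ‖(Xi r n j *ᵥ ![(a : ℂ), ((-b : ℝ) : ℂ)]) 1‖ ^ 2 := by
  obtain ⟨ω, rfl, rfl⟩ := exists_eq_mul_of_orthogonal hab horth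
  have hω : ‖ω‖ ^ 2 = 1 := by
    rw [norm_mul, norm_mul, mul_pow, mul_pow, ← mul_add] at hnorm
    simpa [hab] using hnorm
  rw [mu_mul_ofReal, hω, one_mul]

lemma front_one_sq_add_sq (hr : 1 < r) : front r 1 ^ 2 + (decay r * front r 0) ^ 2 = 1 := by
  rw [mul_pow, front_sq hr, front_sq hr, decay]
  push_cast
  rw [add_sub_cancel_right, add_zero]
  field_simp
  ring

theorem mu_eq_amp_sq (hr : 1 < r) {α β : ℂ} (hnorm : ‖α‖ ^ 2 + ‖β‖ ^ 2 = 1)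
    (horth : (Real.sqrt (r - 1) : ℂ) * α + (Real.sqrt (r + 1) : ℂ) * β = 0) (n j : ℕ) :
    mu r α β n j = amp₁ r n j ^ 2 + amp₂ r n j ^ 2 := by
  have hs : (√(2 * r) : ℂ) ≠ 0 := by exact_mod_cast (Real.sqrt_pos.2 (by linarith)).ne'
  have horth' : ((decay r * front r 0 : ℝ) : ℂ) * α + (front r 1 : ℂ) * β = 0 := by
    rw [← sqrt_two_mul_front_one hr, ← sqrt_two_mul_decay_mul_front_zero hr] at horth
    push_cast at horth ⊢
    apply mul_left_cancel₀ hs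
    linear_combination horth
  rw [mu_eq_of_orthogonal (front_one_sq_add_sq hr) hnorm horth', Xi_mulVec hr]
  simp

def tailMass (r : ℝ) (j : ℕ) : ℝ := tail₁ r j ^ 2 + tail₂ r j ^ 2

theorem mu_eq_of_add_two_le (hr : 1 < r) {α β : ℂ} (hnorm : ‖α‖ ^ 2 + ‖β‖ ^ 2 = 1)
    (horth : (Real.sqrt (r - 1) : ℂ) * α + (Real.sqrt (r + 1) : ℂ) * β = 0) {n j : ℕ}
    (h : j + 2 ≤ n) : mu r α β n j = (decay r ^ 2) ^ (n - j - 2) * tailMass r j := by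
  rw [mu_eq_amp_sq hr hnorm horth, amp₁_of_add_two_le r h, amp₂_of_add_two_le r h, tailMass,
    mul_pow, mul_pow, ← pow_mul, mul_comm _ 2, pow_mul, neg_sq]
  ring

lemma tailMass_le (hr : 1 < r) (j : ℕ) : tailMass r j ≤ 1 + r / (2 * (r - 1)) := by
  have hj := add_nat_pos hr j
  have hL : tail₁ r j ^ 2 ≤ 1 := by
    rw [tail₁_sq hr, div_le_one (by positivity)]
    nlinarith
  have hκ : ((2 * r - 1) / r ^ 2 - 1 / (r + j)) ^ 2 ≤ 1 := by
    have h1 : 0 < (2 * r - 1) / r ^ 2 := by apply div_pos <;> nlinarith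
    have h2 : (2 * r - 1) / r ^ 2 ≤ 1 := by rw [div_le_one (by positivity)]; nlinarith
    have h3 : 0 < 1 / (r + j) := by positivity
    have h4 : 1 / (r + j) ≤ 1 := by rw [div_le_one hj]; linarith
    nlinarith
  have hfront : front r j ^ 2 ≤ r / (2 * (r - 1)) := by
    rw [front_sq hr, div_le_div_iff₀ (by nlinarith) (by positivity)]
    nlinarith
  have hR : tail₂ r j ^ 2 ≤ r / (2 * (r - 1)) := by
    rw [tail₂, mul_pow]
    nlinarith [sq_nonneg (front r j)]
  rw [tailMass]
  linarith

lemma le_tailMass (hr : 1 < r) (j : ℕ) : 1 / 2 / (j + (r + 1)) ^ 2 ≤ tailMass r j := by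
  calc 1 / 2 / (j + (r + 1)) ^ 2 ≤ 1 / (2 * (r + j) * (r + j + 1)) := by
        rw [div_div]
        exact one_div_le_one_div_of_le (by positivity) (by nlinarith)
    _ ≤ tailMass r j := by
        rw [← tail₁_sq hr, tailMass]
        nlinarith [sq_nonneg (tail₂ r j)]

end

end QuantumWalk

/-- Large deviation type convergence: for the initial state orthogonal to
`l = (√(r−1), √(r+1))`, `(1/n)·log P(1 − X_n/n > ε) → ε·log(((1−r)/r)²) = 2ε·log((r−1)/r)`. -/
theorem large_deviation (r : ℝ) (hr : 1 < r) (α β : ℂ)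
    (hnorm : ‖α‖ ^ 2 + ‖β‖ ^ 2 = 1)
    (horth : (Real.sqrt (r - 1) : ℂ) * α + (Real.sqrt (r + 1) : ℂ) * β = 0)
    (ε : ℝ) (hε : 0 < ε) (hε1 : ε < 1) :
    Tendsto (fun n : ℕ => (1 : ℝ) / n *
        Real.log (∑ j ∈ Finset.range n,
          if (j : ℝ) < n * (1 - ε) then mu r α β n j else 0))
      atTop (nhds (2 * ε * Real.log ((r - 1) / r))) := by
  have hq0 : 0 < QuantumWalk.decay r := div_pos (by linarith) (by linarith)
  have hq1 : QuantumWalk.decay r ^ 2 < 1 := by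
    rw [sq_lt_one_iff₀ hq0.le, QuantumWalk.decay, div_lt_one (by linarith)]
    linarith
  have hK := eventually_one_le_ceil_and_ceil_add_one_le hε hε1
  have hlim := tendsto_log_sum_range_pow_mul (pow_pos hq0 2) hq1 one_half_pos (by linarith)
    (QuantumWalk.le_tailMass hr) (QuantumWalk.tailMass_le hr) hK
    (tendsto_sub_one_sub_ceil_div hε hε1)
  rw [log_pow, QuantumWalk.decay, Nat.cast_ofNat, ← mul_assoc, mul_comm ε 2] at hlim
  refine hlim.congr' ?_
  filter_upwards [hK] with n ⟨_, hn⟩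
  rw [← sum_filter, filter_range_natCast_lt (by omega)]
  refine congrArg (1 / (n : ℝ) * log ·) (sum_congr rfl fun j hj => ?_)
  rw [QuantumWalk.mu_eq_of_add_two_le hr hnorm horth (by have := mem_range.1 hj; omega),
    QuantumWalk.decay]
end

section
/- The weight of the rightmost path: for every n ≥ 1, Ξ_n(n) = √((r/(r+1))·(r+n)/(r+n−1)) · Q_0, where Q_0 = [[0, 0], [−1/r, √(1−1/r²)]]; consequently lim_{n→∞} Ξ_n(n) = √(r/(r+1)) · [[0, 0], [−1/r, √(1−1/r²)]] (entrywise limit of 2×2 matrices). -/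
open Filter Topology Matrix

/-! Since `Ξ_n(j) = 0` for `j > n`, only the term `Q_n Ξ_n(n)` survives in `Ξ_{n+1}(n+1)`. Every
`Q_j` acts on a matrix with zero first row as multiplication by `ρ_j`, so
`Ξ_n(n) = (ρ_1 ⋯ ρ_{n-1}) Q_0`, and the product telescopes because
`ρ_j² = (r+j-1)(r+j+1)/(r+j)²`. -/

theorem Xi_eq_zero_of_lt (r : ℝ) {n j : ℕ} (h : n < j) : Xi r n j = 0 := by
  induction n generalizing j with
  | zero =>
    obtain ⟨j, rfl⟩ := Nat.exists_eq_add_one_of_ne_zero h.ne'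
    rfl
  | succ n ih =>
    obtain ⟨j, rfl⟩ := Nat.exists_eq_add_one_of_ne_zero (Nat.ne_zero_of_lt h)
    change Pmat r (j + 2) * Xi r n (j + 2) + Qmat r j * Xi r n j = 0
    rw [ih (by omega), ih (by omega), mul_zero, mul_zero, add_zero]

theorem Xi_succ_diag (r : ℝ) (n : ℕ) : Xi r (n + 1) (n + 1) = Qmat r n * Xi r n n := by
  change Pmat r (n + 2) * Xi r n (n + 2) + Qmat r n * Xi r n n = _
  rw [Xi_eq_zero_of_lt r (by omega), mul_zero, zero_add]

theorem Qmat_mul_of_row_zero (r : ℝ) (j : ℕ) {A : Matrix (Fin 2) (Fin 2) ℂ} (hA : A 0 = 0) :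
    Qmat r j * A = (rho r j : ℂ) • A := by
  ext i k
  have hA0 : A 0 k = 0 := congrFun hA k
  fin_cases i <;> simp [Qmat, Matrix.mul_apply, Fin.sum_univ_two, hA0]

theorem Xi_succ_diag_eq_prod_smul (r : ℝ) (n : ℕ) :
    Xi r (n + 1) (n + 1) = ((∏ j ∈ Finset.range n, rho r (j + 1) : ℝ) : ℂ) • Qmat r 0 := by
  induction n with
  | zero => simp [Xi]
  | succ n ih =>
    have hQ0 : Qmat r 0 0 = 0 := by ext k; fin_cases k <;> rfl
    rw [Xi_succ_diag, ih, Matrix.mul_smul, Qmat_mul_of_row_zero r _ hQ0, smul_smul,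
      Finset.prod_range_succ, Complex.ofReal_mul, mul_comm]

theorem rho_sq {r : ℝ} {j : ℕ} (hj : 1 ≤ r + j) :
    rho r j ^ 2 = (r + j - 1) * (r + j + 1) / (r + j) ^ 2 := by
  have hpos : 0 < r + j := by linarith
  have hγ : gam r j ^ 2 ≤ 1 := by
    rw [gam, div_pow, one_pow, div_le_one (by positivity)]
    nlinarith
  rw [rho, Real.sq_sqrt (by linarith), gam]
  field_simp
  ring

theorem prod_rho_eq_sqrt {r : ℝ} (hr : 0 < r) (n : ℕ) :
    ∏ j ∈ Finset.range n, rho r (j + 1) =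
      Real.sqrt (r / (r + 1) * ((r + (n + 1 : ℕ)) / (r + (n + 1 : ℕ) - 1))) := by
  induction n with
  | zero =>
    rw [Finset.prod_range_zero, eq_comm, Real.sqrt_eq_one]
    push_cast
    rw [add_sub_cancel_right]
    field_simp
  | succ n ih =>
    have hn : (0 : ℝ) ≤ n := n.cast_nonneg
    have hj : 1 ≤ r + ((n + 1 : ℕ) : ℝ) := by push_cast; linarith
    have hrho : rho r (n + 1) = Real.sqrt (rho r (n + 1) ^ 2) :=
      (Real.sqrt_sq (Real.sqrt_nonneg _)).symm
    rw [Finset.prod_range_succ, ih, hrho, rho_sq hj, ← Real.sqrt_mul (by positivity)]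
    congr 1
    push_cast
    have h1 : r + n ≠ 0 := by positivity
    have h2 : r + (n + 1) ≠ 0 := by positivity
    rw [show r + (n + 1 + 1 : ℝ) - 1 = r + (n + 1) by ring, show r + (n + 1 : ℝ) - 1 = r + n by ring]
    field_simp
    ring

theorem tendsto_add_div_add_sub_one (r : ℝ) :
    Tendsto (fun n : ℕ => (r + n) / (r + n - 1)) atTop (𝓝 1) := by
  have h := tendsto_add_mul_div_add_mul_atTop_nhds r (r - 1) 1 one_ne_zero
  simp only [one_mul, div_one] at h
  refine h.congr fun n => ?_
  ring_nf

/-- The weight of the rightmost path: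
`Ξ_n(n) = √((r/(r+1))·(r+n)/(r+n−1)) · Q_0` for `n ≥ 1`, and consequently
`Ξ_n(n) → √(r/(r+1)) · [[0,0],[−1/r, √(1−1/r²)]]` entrywise. -/
theorem rightmost_path_weight (r : ℝ) (hr : 1 < r) :
    (∀ n : ℕ, 1 ≤ n →
      Xi r n n = (Real.sqrt (r / (r + 1) * ((r + n) / (r + n - 1))) : ℂ) •
        !![0, 0; (-(1 / r) : ℂ), (Real.sqrt (1 - 1 / r ^ 2) : ℂ)]) ∧
    ∀ i k : Fin 2,
      Tendsto (fun n : ℕ => Xi r n n i k) atTop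
        (nhds (((Real.sqrt (r / (r + 1)) : ℂ) •
          !![0, 0; (-(1 / r) : ℂ), (Real.sqrt (1 - 1 / r ^ 2) : ℂ)]) i k)) := by
  set Q₀ : Matrix (Fin 2) (Fin 2) ℂ := !![0, 0; (-(1 / r) : ℂ), (Real.sqrt (1 - 1 / r ^ 2) : ℂ)]
  have hQ₀ : Qmat r 0 = Q₀ := by simp [Q₀, Qmat, gam, rho]
  have hdiag : ∀ n : ℕ, 1 ≤ n →
      Xi r n n = (Real.sqrt (r / (r + 1) * ((r + n) / (r + n - 1))) : ℂ) • Q₀ := by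
    intro n hn
    obtain ⟨m, rfl⟩ := Nat.exists_eq_add_of_le' hn
    rw [Xi_succ_diag_eq_prod_smul, prod_rho_eq_sqrt (by linarith), hQ₀]
  refine ⟨hdiag, fun i k => ?_⟩
  have hcoef : Tendsto (fun n : ℕ => Real.sqrt (r / (r + 1) * ((r + n) / (r + n - 1)))) atTop
      (𝓝 (Real.sqrt (r / (r + 1)))) := by
    simpa using ((tendsto_add_div_add_sub_one r).const_mul (r / (r + 1))).sqrt
  have hlim : Tendsto (fun n : ℕ => Xi r n n) atTop (𝓝 ((Real.sqrt (r / (r + 1)) : ℂ) • Q₀)) :=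
    ((Complex.continuous_ofReal.tendsto _).comp hcoef).smul_const Q₀
      |>.congr' (eventually_ge_atTop 1 |>.mono fun n hn => (hdiag n hn).symm)
  exact (hlim.apply_nhds i).apply_nhds k
end

section
/- The weight of the stay-then-right path: for every n ≥ 1, Ξ_n(n−1) = √(((r−1)/r)·(r+n−1)/(r+n−2)) · S_0, where S_0 = [[0, 0], [√(1−1/r²), 1/r]]; consequently lim_{n→∞} Ξ_n(n−1) = √((r−1)/r) · [[0, 0], [√(1−1/r²), 1/r]] (entrywise limit of 2×2 matrices). -/
open Filter Topology Matrix

/-!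
After `n` steps the walk has moved at most `n` sites, so `Ξ_n(j) = 0` for `j > n`. Hence on the
diagonal `j = n - 1` only the `Q`-term of the recursion survives, and the only contributing path
stays at the origin once (factor `S_0`) and then moves right. Since `Q_j` acts on matrices with
zero first row as multiplication by `ρ_j`, this gives `Ξ_{m+1}(m) = (ρ_0 ⋯ ρ_{m-1}) S_0`. The
product `∏ (1 - 1/(r+j)²) = ∏ (r+j-1)(r+j+1)/(r+j)²` telescopes to `(r-1)/r · (r+m)/(r+m-1)`.
-/

namespace Xi

variable (r : ℝ)

theorem eq_zero_of_lt : ∀ {n j : ℕ}, n < j → Xi r n j = 0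
  | 0, _ + 1, _ => rfl
  | n + 1, j + 1, h => by
    rw [Xi, eq_zero_of_lt (by omega : n < j + 2), eq_zero_of_lt (by omega : n < j),
      mul_zero, mul_zero, add_zero]

theorem one_zero : Xi r 1 0 = Smat r := by
  simp [Xi]

theorem succ_succ_self (m : ℕ) : Xi r (m + 2) (m + 1) = Qmat r m * Xi r (m + 1) m := by
  rw [Xi, eq_zero_of_lt r (by omega : m + 1 < m + 2), mul_zero, zero_add]

end Xi

theorem Qmat_mul_of_first_row_zero (r : ℝ) (j : ℕ) (a b : ℂ) :
    Qmat r j * !![0, 0; a, b] = (rho r j : ℂ) • !![0, 0; a, b] := by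
  ext i k
  fin_cases i <;> fin_cases k <;> simp [Qmat, mul_comm]

theorem Xi_succ_self_eq_prod_rho_smul (r : ℝ) (m : ℕ) :
    Xi r (m + 1) m = ((∏ j ∈ Finset.range m, rho r j : ℝ) : ℂ) • Smat r := by
  induction m with
  | zero => simp [Xi.one_zero]
  | succ m ih =>
    rw [Xi.succ_succ_self, ih, mul_smul_comm, Smat, Qmat_mul_of_first_row_zero, smul_smul,
      Finset.prod_range_succ, Complex.ofReal_mul, mul_comm]

theorem Smat_eq (r : ℝ) :
    Smat r = !![0, 0; (Real.sqrt (1 - 1 / r ^ 2) : ℂ), ((1 / r : ℝ) : ℂ)] := by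
  simp [Smat, rho, gam]

theorem one_sub_gam_sq_nonneg {r : ℝ} (hr : 1 ≤ r) (j : ℕ) : 0 ≤ 1 - gam r j ^ 2 := by
  have hj : 1 ≤ r + j := le_add_of_le_of_nonneg hr j.cast_nonneg
  have h : gam r j ≤ 1 := (div_le_one (by linarith)).mpr hj
  have h0 : 0 ≤ gam r j := by unfold gam; positivity
  nlinarith

theorem prod_one_sub_gam_sq {r : ℝ} (hr : 1 < r) (m : ℕ) :
    ∏ j ∈ Finset.range m, (1 - gam r j ^ 2) = (r - 1) / r * ((r + m) / (r + m - 1)) := by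
  induction m with
  | zero =>
    have h1 : r - 1 ≠ 0 := by linarith
    have h0 : r ≠ 0 := by linarith
    simp [field]
  | succ m ih =>
    have hm : (0 : ℝ) ≤ m := m.cast_nonneg
    have h1 : r + m - 1 ≠ 0 := by linarith
    have h2 : r + m ≠ 0 := by linarith
    rw [Finset.prod_range_succ, ih, gam]
    push_cast
    rw [show r + (m + 1 : ℝ) - 1 = r + m by ring]
    field_simp
    ring

theorem prod_rho {r : ℝ} (hr : 1 < r) (m : ℕ) :
    ∏ j ∈ Finset.range m, rho r j = Real.sqrt ((r - 1) / r * ((r + m) / (r + m - 1))) := by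
  rw [← prod_one_sub_gam_sq hr, Real.sqrt_prod _ fun j _ => one_sub_gam_sq_nonneg hr.le j]
  rfl

theorem Xi_succ_self_eq_sqrt_smul {r : ℝ} (hr : 1 < r) (m : ℕ) :
    Xi r (m + 1) m = (Real.sqrt ((r - 1) / r * ((r + m) / (r + m - 1))) : ℂ) •
      !![0, 0; (Real.sqrt (1 - 1 / r ^ 2) : ℂ), ((1 / r : ℝ) : ℂ)] := by
  rw [Xi_succ_self_eq_prod_rho_smul, prod_rho hr, Smat_eq]

theorem tendsto_add_sub_one_div_add_sub_two (r : ℝ) :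
    Tendsto (fun n : ℕ => (r + n - 1) / (r + n - 2)) atTop (𝓝 1) := by
  have h := tendsto_add_mul_div_add_mul_atTop_nhds (r - 1) (r - 2) 1 one_ne_zero
  simp only [one_mul, div_one] at h
  refine h.congr fun n => ?_
  ring_nf

/-- The weight of the stay-then-right path:
`Ξ_n(n−1) = √(((r−1)/r)·(r+n−1)/(r+n−2)) · S_0` for `n ≥ 1`, and consequently
`Ξ_n(n−1) → √((r−1)/r) · [[0,0],[√(1−1/r²), 1/r]]` entrywise. -/
theorem stay_then_right_path_weight (r : ℝ) (hr : 1 < r) :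
    (∀ n : ℕ, 1 ≤ n →
      Xi r n (n - 1) = (Real.sqrt ((r - 1) / r * ((r + n - 1) / (r + n - 2))) : ℂ) •
        !![0, 0; (Real.sqrt (1 - 1 / r ^ 2) : ℂ), ((1 / r : ℝ) : ℂ)]) ∧
    ∀ i k : Fin 2,
      Tendsto (fun n : ℕ => Xi r n (n - 1) i k) atTop
        (nhds (((Real.sqrt ((r - 1) / r) : ℂ) •
          !![0, 0; (Real.sqrt (1 - 1 / r ^ 2) : ℂ), ((1 / r : ℝ) : ℂ)]) i k)) := by
  have hform : ∀ n : ℕ, 1 ≤ n →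
      Xi r n (n - 1) = (Real.sqrt ((r - 1) / r * ((r + n - 1) / (r + n - 2))) : ℂ) •
        !![0, 0; (Real.sqrt (1 - 1 / r ^ 2) : ℂ), ((1 / r : ℝ) : ℂ)] := by
    rintro (_ | m) hm
    · omega
    · rw [Nat.add_sub_cancel, Xi_succ_self_eq_sqrt_smul hr]
      push_cast
      ring_nf
  refine ⟨hform, fun i k => ?_⟩
  have hscalar : Tendsto (fun n : ℕ => (Real.sqrt ((r - 1) / r * ((r + n - 1) / (r + n - 2))) : ℂ))
      atTop (𝓝 (Real.sqrt ((r - 1) / r) : ℂ)) := by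
    have h := (tendsto_add_sub_one_div_add_sub_two r).const_mul ((r - 1) / r)
    rw [mul_one] at h
    exact (Complex.continuous_ofReal.tendsto _).comp ((Real.continuous_sqrt.tendsto _).comp h)
  refine (((hscalar.smul_const (_ : Matrix (Fin 2) (Fin 2) ℂ)).apply_nhds i).apply_nhds k).congr' ?_
  filter_upwards [eventually_ge_atTop 1] with n hn
  rw [hform n hn]
end

section
/- Absolutely continuous part of the spectral measure: let r > 1 and F(z) = ((z+1)·((r−1)z − r)) / ((z−1)·((r−1)z + r)). Then for every θ ∈ (0, 2π), lim_{s→1⁻} Re F(s·e^{iθ}) = cos²(θ/2) / (cos²(θ/2) + 1/(4r(r−1))). -/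
open Filter Topology Complex ComplexConjugate

/-!
On the unit circle minus `1` the denominator `(z - 1)((r - 1)z + r)` of `F` does not vanish
(`|(r - 1)z| = r - 1 < r`), so `F` is continuous there and the radial limit of `Re F` is just
`Re F(e^{iθ})`. Multiplying by the conjugate of the denominator and using `|z| = 1`,
`Re F(z) = m(1 + Re z) / (m(1 + Re z) + 1)` with `m = 2r(r - 1)`; finally `1 + cos θ = 2cos²(θ/2)`.
-/

noncomputable def caratheodoryFn (r : ℝ) (z : ℂ) : ℂ :=
  (z + 1) * ((r - 1) * z - r) / ((z - 1) * ((r - 1) * z + r))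

theorem tendsto_re_comp_ofReal_mul_nhdsLT_one {F : ℂ → ℂ} {z : ℂ} (hF : ContinuousAt F z) :
    Tendsto (fun s : ℝ => (F (s * z)).re) (𝓝[<] 1) (𝓝 (F z).re) := by
  have hs : Tendsto (fun s : ℝ => (s : ℂ) * z) (𝓝 1) (𝓝 z) :=
    (continuous_ofReal.mul continuous_const).tendsto' 1 z (by simp)
  exact ((continuous_re.tendsto _).comp (hF.tendsto.comp hs)).mono_left nhdsWithin_le_nhds

theorem exp_ofReal_mul_I_ne_one {θ : ℝ} (hθ₀ : 0 < θ) (hθ₂π : θ < 2 * Real.pi) :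
    exp (θ * I) ≠ 1 := by
  intro h
  have hcos := congrArg re h
  rw [exp_ofReal_mul_I_re, one_re, Real.cos_eq_one_iff_of_lt_of_lt (by linarith) hθ₂π] at hcos
  exact hθ₀.ne' hcos

theorem continuousAt_caratheodoryFn {r : ℝ} {z : ℂ} (hz : z ≠ 1) (hzr : (r - 1) * z + r ≠ 0) :
    ContinuousAt (caratheodoryFn r) z :=
  (by fun_prop : Continuous fun z : ℂ => (z + 1) * ((r - 1) * z - r)).continuousAt.div
    (by fun_prop) (mul_ne_zero (sub_ne_zero.2 hz) hzr)

theorem re_div_eq_re_mul_conj_div_normSq (w z : ℂ) :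
    (w / z).re = (w * conj z).re / normSq z := by
  simp [div_re, add_div]

section UnitCircle

variable {z : ℂ}

theorem sub_one_mul_add_ne_zero_of_norm_eq_one (hz : ‖z‖ = 1) {r : ℝ} (hr : 1 / 2 < r) :
    (r - 1) * z + r ≠ 0 := by
  intro h
  have hnorm : ‖((r - 1 : ℝ) : ℂ) * z‖ = ‖(r : ℂ)‖ := by
    rw [← norm_neg (r : ℂ), ← eq_neg_of_add_eq_zero_left h]
    push_cast
    rfl
  rw [norm_mul, hz, mul_one, norm_real, norm_real, Real.norm_eq_abs, Real.norm_eq_abs,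
    abs_of_pos (by linarith : (0 : ℝ) < r)] at hnorm
  cases abs_cases (r - 1) <;> linarith

theorem re_sq_add_im_sq_of_norm_eq_one (hz : ‖z‖ = 1) : z.re ^ 2 + z.im ^ 2 = 1 := by
  rw [← normSq_add_mul_I z.re z.im, re_add_im, normSq_eq_norm_sq, hz, one_pow]

theorem normSq_sub_one_of_norm_eq_one (hz : ‖z‖ = 1) : normSq (z - 1) = 2 * (1 - z.re) := by
  rw [normSq_apply]
  simp only [sub_re, one_re, sub_im, one_im, sub_zero]
  linear_combination re_sq_add_im_sq_of_norm_eq_one hz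

theorem normSq_sub_one_mul_add_of_norm_eq_one (hz : ‖z‖ = 1) (r : ℝ) :
    normSq ((r - 1) * z + r) = 2 * r * (r - 1) * (1 + z.re) + 1 := by
  rw [normSq_apply]
  simp only [add_re, mul_re, sub_re, ofReal_re, one_re, sub_im, ofReal_im, one_im, sub_self,
    zero_mul, sub_zero, add_im, mul_im, add_zero]
  linear_combination (r - 1) ^ 2 * re_sq_add_im_sq_of_norm_eq_one hz

theorem re_mul_conj_caratheodoryFn_denom (hz : ‖z‖ = 1) (r : ℝ) :
    ((z + 1) * ((r - 1) * z - r) * conj ((z - 1) * ((r - 1) * z + r))).re =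
      normSq (z - 1) * (2 * r * (r - 1) * (1 + z.re)) := by
  rw [normSq_sub_one_of_norm_eq_one hz]
  simp only [map_mul, map_sub, map_one, map_add, conj_ofReal, mul_re, add_re, one_re, sub_re,
    ofReal_re, sub_im, ofReal_im, one_im, sub_self, zero_mul, sub_zero, add_im, add_zero, mul_im,
    conj_re, conj_im, mul_neg, neg_zero, neg_mul, neg_neg]
  linear_combination (r ^ 2 * (z.re ^ 2 + z.im ^ 2 + 3) - 2 * r * (z.re ^ 2 + z.im ^ 2 + 2)
    + z.re ^ 2 + z.im ^ 2) * re_sq_add_im_sq_of_norm_eq_one hz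

theorem re_caratheodoryFn_of_norm_eq_one (hz : ‖z‖ = 1) (hz₁ : z ≠ 1) (r : ℝ) :
    (caratheodoryFn r z).re =
      2 * r * (r - 1) * (1 + z.re) / (2 * r * (r - 1) * (1 + z.re) + 1) := by
  rw [caratheodoryFn, re_div_eq_re_mul_conj_div_normSq, re_mul_conj_caratheodoryFn_denom hz,
    normSq_mul, normSq_sub_one_mul_add_of_norm_eq_one hz, mul_div_mul_left]
  exact (normSq_pos.2 (sub_ne_zero.2 hz₁)).ne'

end UnitCircle

/-- Absolutely continuous part of the spectral measure: the radial boundary limit of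
`Re F(s·e^{iθ})` as `s → 1⁻` equals `cos²(θ/2)/(cos²(θ/2) + 1/(4r(r−1)))` for
`θ ∈ (0, 2π)`, where `F(z) = ((z+1)((r−1)z − r))/((z−1)((r−1)z + r))`. -/
theorem spectral_measure_ac_part (r : ℝ) (hr : 1 < r)
    (F : ℂ → ℂ) (hF : ∀ z : ℂ,
      F z = (z + 1) * (((r : ℂ) - 1) * z - r) / ((z - 1) * (((r : ℂ) - 1) * z + r))) :
    ∀ θ : ℝ, θ ∈ Set.Ioo 0 (2 * Real.pi) →
      Tendsto (fun s : ℝ => (F ((s : ℂ) * Complex.exp ((θ : ℂ) * Complex.I))).re)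
        (nhdsWithin 1 (Set.Iio 1))
        (nhds (Real.cos (θ / 2) ^ 2 /
          (Real.cos (θ / 2) ^ 2 + 1 / (4 * r * (r - 1))))) := by
  rintro θ ⟨hθ₀, hθ₂π⟩
  obtain rfl : F = caratheodoryFn r := funext hF
  have hz : ‖exp (θ * I)‖ = 1 := norm_exp_ofReal_mul_I θ
  have hz₁ : exp (θ * I) ≠ 1 := exp_ofReal_mul_I_ne_one hθ₀ hθ₂π
  have hzr := sub_one_mul_add_ne_zero_of_norm_eq_one hz (r := r) (by linarith)
  convert tendsto_re_comp_ofReal_mul_nhdsLT_one (continuousAt_caratheodoryFn hz₁ hzr) using 2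
  have hcos : 1 + Real.cos θ = 2 * Real.cos (θ / 2) ^ 2 := by
    rw [Real.cos_sq, mul_div_cancel₀ θ two_ne_zero]
    ring
  have hr₀ : r ≠ 0 := (zero_lt_one.trans hr).ne'
  have hr₁ : r - 1 ≠ 0 := sub_ne_zero.2 hr.ne'
  rw [re_caratheodoryFn_of_norm_eq_one hz hz₁, exp_ofReal_mul_I_re, hcos]
  field_simp
  ring
end

section
/- Mass point of the spectral measure at z = 1: let r > 1 and F(z) = ((z+1)·((r−1)z − r)) / ((z−1)·((r−1)z + r)). Then lim_{s→1⁻} ((1−s)/2)·F(s) = 1/(2r−1), where s ranges over real numbers in (0,1). -/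
/-!
Away from `z = 1` the factor `(1 - z) / 2` cancels the simple pole of `F` at `1`, leaving
`-(z + 1)((r - 1)z - r) / (2((r - 1)z + r))`, which is continuous at `1` because `2r - 1 ≠ 0`;
its value there is `1 / (2r - 1)`.
-/

open Filter Topology

lemma one_sub_div_two_mul_div_sub_one_mul {K : Type*} [Field K] {z : K} (hz : z ≠ 1) (a b : K) :
    (1 - z) / 2 * (a / ((z - 1) * b)) = -a / (2 * b) := by
  rw [div_mul_div_comm, ← neg_sub z 1, neg_mul, ← mul_neg, mul_left_comm (2 : K),
    mul_div_mul_left _ _ (sub_ne_zero.mpr hz)]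

/-- Mass point of the spectral measure at `z = 1`:
`lim_{s→1⁻} ((1−s)/2)·F(s) = 1/(2r−1)` for real `s ∈ (0,1)`, where
`F(z) = ((z+1)((r−1)z − r))/((z−1)((r−1)z + r))`. -/
theorem spectral_measure_mass_point (r : ℝ) (hr : 1 < r)
    (F : ℂ → ℂ) (hF : ∀ z : ℂ,
      F z = (z + 1) * (((r : ℂ) - 1) * z - r) / ((z - 1) * (((r : ℂ) - 1) * z + r))) :
    Tendsto (fun s : ℝ => (((1 - s) / 2 : ℝ) : ℂ) * F (s : ℂ))
      (nhdsWithin 1 (Set.Ioo 0 1)) (nhds ((1 / (2 * (r : ℂ) - 1)))) := by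
  set g : ℂ → ℂ := fun z => -((z + 1) * ((r - 1) * z - r)) / (2 * ((r - 1) * z + r))
  have hden : ((r : ℂ) - 1) * 1 + r ≠ 0 := by
    rw [mul_one, ← sub_add_comm, sub_add_eq_add_sub]
    exact_mod_cast (by linarith : r + r - 1 ≠ 0)
  have hg : ContinuousAt g 1 := by fun_prop (disch := simpa using hden)
  have hg1 : g 1 = 1 / (2 * r - 1) := by
    simp only [g]
    field_simp
    ring
  have heq : ∀ s ∈ Set.Ioo (0 : ℝ) 1, (((1 - s) / 2 : ℝ) : ℂ) * F s = g s := fun s hs => by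
    rw [hF]
    push_cast
    exact one_sub_div_two_mul_div_sub_one_mul (by exact_mod_cast hs.2.ne) _ _
  rw [tendsto_congr' (eventually_nhdsWithin_of_forall heq), ← hg1]
  exact (hg.comp_of_eq Complex.continuous_ofReal.continuousAt (by simp)).tendsto.mono_left
    nhdsWithin_le_nhds
end
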